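/- arXiv:2509.04101 — 2 statements merged into one kernel-verified Lean document; each statement's English description precedes it below -/
import Mathlib

section
/- Greedy k-center (Gonzalez's algorithm) achieves a 2-approximation: for a finite set of points P in a metric space and budget n ≥ 1, the set S of n centers produced by iteratively adding the point of P farthest from the current centers satisfies max_{p∈P} min_{s∈S} d(p,s) ≤ 2 · min_{S'⊆P, |S'|=n} max_{p∈P} min_{s∈S'} d(p,s). -/
/-!
Let `p` be a point of `P` farthest from the greedy centers `c 0, …, c (n-1)`, at distance `r`.
By greedy choice every `c j` was at least as far from `c 0, …, c (j-1)` as `p` is, so the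
`n + 1` points `c 0, …, c (n-1), p` are pairwise at distance `≥ r`. If every point of `P` lies
within `R` of the `n` centers `S'`, two of these `n + 1` points share a nearest center in `S'`,
hence are within `2 R` of each other, and `r ≤ 2 R`.
-/

open Finset

section

variable {X : Type*} [PseudoMetricSpace X]

def IsFarthestPointSeq {n : ℕ} (P : Finset X) (c : Fin n → X) : Prop :=
  ∀ t : Fin n, ∀ ht : (Iio t).Nonempty, ∀ p ∈ P,
    (Iio t).inf' ht (fun i => dist p (c i)) ≤ (Iio t).inf' ht (fun i => dist (c t) (c i))

lemma exists_ne_dist_le_two_mul_of_card_lt {ι : Type*} [Fintype ι] {S : Finset X} {g : ι → X}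
    {R : ℝ} (hcard : #S < Fintype.card ι) (hnear : ∀ k, ∃ s ∈ S, dist (g k) s ≤ R) :
    ∃ i j, i ≠ j ∧ dist (g i) (g j) ≤ 2 * R := by
  choose s hsS hs using hnear
  obtain ⟨i, j, hij, hsij⟩ := Fintype.exists_ne_map_eq_of_card_lt
    (fun k => (⟨s k, hsS k⟩ : S)) (by simpa using hcard)
  have hsij : s i = s j := congrArg Subtype.val hsij
  refine ⟨i, j, hij, ?_⟩
  calc dist (g i) (g j) ≤ dist (g i) (s i) + dist (s j) (g j) := hsij ▸ dist_triangle _ _ _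
    _ ≤ 2 * R := by rw [dist_comm (s j)]; linarith [hs i, hs j]

namespace IsFarthestPointSeq

variable {n : ℕ} {P : Finset X} {c : Fin n → X}

lemma inf'_dist_le_dist (hc : IsFarthestPointSeq P c) (hne : (univ : Finset (Fin n)).Nonempty)
    {p : X} (hp : p ∈ P) {i j : Fin n} (hij : i < j) :
    univ.inf' hne (fun k => dist p (c k)) ≤ dist (c j) (c i) := by
  have hi : i ∈ Iio j := mem_Iio.2 hij
  calc univ.inf' hne (fun k => dist p (c k))
      ≤ (Iio j).inf' ⟨i, hi⟩ (fun k => dist p (c k)) := inf'_mono _ (subset_univ _) _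
    _ ≤ (Iio j).inf' ⟨i, hi⟩ (fun k => dist (c j) (c k)) := hc j _ p hp
    _ ≤ dist (c j) (c i) := inf'_le _ hi

lemma pairwise_le_dist_snoc (hc : IsFarthestPointSeq P c)
    (hne : (univ : Finset (Fin n)).Nonempty) {p : X} (hp : p ∈ P) :
    Pairwise fun i j : Fin (n + 1) =>
      univ.inf' hne (fun k => dist p (c k)) ≤
        dist ((Fin.snoc c p : Fin (n + 1) → X) i) ((Fin.snoc c p : Fin (n + 1) → X) j) := by
  intro i j hij
  wlog hlt : i < j generalizing i j
  · rw [dist_comm]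
    exact this hij.symm (hij.symm.lt_of_le (not_lt.1 hlt))
  obtain ⟨i, rfl⟩ := Fin.exists_castSucc_eq.2 (hlt.trans_le (Fin.le_last j)).ne
  induction j using Fin.lastCases with
  | last =>
    rw [Fin.snoc_castSucc, Fin.snoc_last, dist_comm]
    exact inf'_le _ (mem_univ i)
  | cast j =>
    rw [dist_comm]
    simpa using hc.inf'_dist_le_dist hne hp (Fin.castSucc_lt_castSucc_iff.1 hlt)

end IsFarthestPointSeq

end

theorem stmt_9_general {X : Type*} [MetricSpace X] (P : Finset X) (hP : P.Nonempty)
    (n : ℕ) (hn : 1 ≤ n)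
    (c : Fin n → X) (hc : ∀ i, c i ∈ P)
    (hgreedy : ∀ t : Fin n, ∀ ht : (Finset.Iio t).Nonempty, ∀ p ∈ P,
        (Finset.Iio t).inf' ht (fun i => dist p (c i))
          ≤ (Finset.Iio t).inf' ht (fun i => dist (c t) (c i)))
    (S' : Finset X) (hcard : S'.card = n)
    (hS'ne : S'.Nonempty) :
    P.sup' hP (fun p => (Finset.univ : Finset (Fin n)).inf'
        ⟨⟨0, hn⟩, Finset.mem_univ _⟩ (fun i => dist p (c i)))
      ≤ 2 * P.sup' hP (fun p => S'.inf' hS'ne (fun s => dist p s)) := by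
  obtain ⟨p, hpP, hp⟩ := exists_mem_eq_sup' hP fun p => (univ : Finset (Fin n)).inf'
    ⟨⟨0, hn⟩, mem_univ _⟩ (fun i => dist p (c i))
  rw [hp]
  have hsnoc : ∀ k, (Fin.snoc c p : Fin (n + 1) → X) k ∈ P := fun k => by
    induction k using Fin.lastCases <;> simp [hpP, hc]
  have hnear : ∀ k, ∃ s ∈ S', dist ((Fin.snoc c p : Fin (n + 1) → X) k) s ≤
      P.sup' hP (fun p => S'.inf' hS'ne (fun s => dist p s)) := fun k =>
    (inf'_le_iff hS'ne).1 (le_sup' (fun q => S'.inf' hS'ne (fun s => dist q s)) (hsnoc k))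
  obtain ⟨i, j, hij, hdist⟩ :=
    exists_ne_dist_le_two_mul_of_card_lt (by simp [hcard]) hnear
  exact (IsFarthestPointSeq.pairwise_le_dist_snoc hgreedy _ hpP hij).trans hdist

/-- Gonzalez's greedy k-center algorithm is a 2-approximation. If
`c 0, …, c (n-1)` is a greedy sequence of centers in a finite set `P` (each `c t` is a point
of `P` farthest from the previously chosen centers), then for every `S' ⊆ P` with
`|S'| = n`, `max_{p∈P} min_i d(p, c i) ≤ 2 · max_{p∈P} min_{s∈S'} d(p, s)`. -/
theorem stmt_9 {X : Type*} [MetricSpace X] (P : Finset X) (hP : P.Nonempty)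
    (n : ℕ) (hn : 1 ≤ n) (hnP : n ≤ P.card)
    (c : Fin n → X) (hc : ∀ i, c i ∈ P)
    (hgreedy : ∀ t : Fin n, ∀ ht : (Finset.Iio t).Nonempty, ∀ p ∈ P,
        (Finset.Iio t).inf' ht (fun i => dist p (c i))
          ≤ (Finset.Iio t).inf' ht (fun i => dist (c t) (c i)))
    (S' : Finset X) (hS' : S' ⊆ P) (hcard : S'.card = n)
    (hS'ne : S'.Nonempty) :
    P.sup' hP (fun p => (Finset.univ : Finset (Fin n)).inf'
        ⟨⟨0, hn⟩, Finset.mem_univ _⟩ (fun i => dist p (c i)))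
      ≤ 2 * P.sup' hP (fun p => S'.inf' hS'ne (fun s => dist p s)) :=
  stmt_9_general P hP n hn c hc hgreedy S' hcard hS'ne
end

section
/- Let S ⊆ [N] and E = max_{k∈[N]} min_{l∈S} ‖(q_k,p_k) − (q_l,p_l)‖ (norm on ℝ^{d+1}). Let ρ be a probability measure on a compact set X ⊂ ℝ^d. Then the L²(ρ)-distance between u_N and u_S satisfies ‖u_N − u_S‖_{L²(ρ)} ≤ E · sup_{x∈X} ‖(x,1)‖_*. -/
/-!
By the duality inequality the `k`-th affine piece exceeds the `l`-th by at most
`‖(q_k,p_k) - (q_l,p_l)‖ · ‖(x,1)‖_*`; choosing `l ∈ S` closest to `k` gives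
`0 ≤ u_N - u_S ≤ E · sup_X ‖(x,1)‖_*` on `X`, hence `ρ`-almost everywhere, and an
`L²` norm under a probability measure is bounded by a uniform bound.
-/

open MeasureTheory

theorem Finset.sup'_sub_sup'_le_sup'_inf'_mul {ι : Type*} {s t : Finset ι} (hs : s.Nonempty)
    (ht : t.Nonempty) (f : ι → ℝ) (g : ι → ι → ℝ) {c : ℝ} (hc : 0 ≤ c)
    (h : ∀ k ∈ t, ∀ l ∈ s, f k - f l ≤ g k l * c) :
    t.sup' ht f - s.sup' hs f ≤ t.sup' ht (fun k => s.inf' hs (g k)) * c := by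
  rw [sub_le_iff_le_add]
  refine Finset.sup'_le ht _ fun k hk => ?_
  obtain ⟨l, hl, hgl⟩ := Finset.exists_mem_eq_inf' hs (g k)
  calc f k ≤ g k l * c + f l := by linarith [h k hk l hl]
    _ ≤ t.sup' ht (fun k => s.inf' hs (g k)) * c + s.sup' hs f := by
      gcongr
      · exact hgl ▸ Finset.le_sup' (fun k => s.inf' hs (g k)) hk
      · exact Finset.le_sup' f hl

theorem Real.sqrt_integral_sq_le_of_ae_abs_le {α : Type*} [MeasurableSpace α] {μ : Measure α}
    [IsProbabilityMeasure μ] {f : α → ℝ} {M : ℝ} (hf : ∀ᵐ x ∂μ, |f x| ≤ M) :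
    √(∫ x, f x ^ 2 ∂μ) ≤ M := by
  obtain ⟨x, hx⟩ := hf.exists
  have hM : 0 ≤ M := (abs_nonneg _).trans hx
  have hint : ∫ x, f x ^ 2 ∂μ ≤ M ^ 2 := by
    simpa using integral_mono_of_nonneg (Filter.Eventually.of_forall fun x => sq_nonneg (f x))
      (integrable_const (M ^ 2)) (hf.mono fun x hx => sq_le_sq' (abs_le.1 hx).1 (abs_le.1 hx).2)
  calc √(∫ x, f x ^ 2 ∂μ) ≤ √(M ^ 2) := Real.sqrt_le_sqrt hint
    _ = M := Real.sqrt_sq hM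

theorem stmt_14_general (d N : ℕ) (q : Fin N → EuclideanSpace ℝ (Fin d)) (p : Fin N → ℝ)
    (S : Finset (Fin N)) (hS : S.Nonempty)
    (nrm dnrm : EuclideanSpace ℝ (Fin d) × ℝ → ℝ)
    (hnrm_nonneg : ∀ z, 0 ≤ nrm z) (hdnrm_nonneg : ∀ w, 0 ≤ dnrm w)
    (hdual : ∀ z w : EuclideanSpace ℝ (Fin d) × ℝ,
      (inner ℝ z.1 w.1 : ℝ) - z.2 * w.2 ≤ nrm z * dnrm w)
    (X : Set (EuclideanSpace ℝ (Fin d)))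
    (ρ : Measure (EuclideanSpace ℝ (Fin d))) [IsProbabilityMeasure ρ] (hsupp : ρ Xᶜ = 0)
    (C : ℝ) (hC : ∀ x ∈ X, dnrm (x, 1) ≤ C) :
    Real.sqrt (∫ x, ((Finset.univ.sup' (hS.mono (Finset.subset_univ S))
          (fun k => (inner ℝ (q k) x : ℝ) - p k))
        - (S.sup' hS (fun k => (inner ℝ (q k) x : ℝ) - p k))) ^ 2 ∂ρ)
      ≤ (Finset.univ.sup' (hS.mono (Finset.subset_univ S))
          (fun k => S.inf' hS (fun l => nrm (q k - q l, p k - p l)))) * C := by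
  have hE : 0 ≤ Finset.univ.sup' (hS.mono (Finset.subset_univ S))
      (fun k => S.inf' hS (fun l => nrm (q k - q l, p k - p l))) :=
    Finset.le_sup'_of_le _ (Finset.mem_univ hS.choose)
      (Finset.le_inf' hS _ fun l _ => hnrm_nonneg _)
  have hgap : ∀ x k l, ((inner ℝ (q k) x : ℝ) - p k) - ((inner ℝ (q l) x : ℝ) - p l)
      ≤ nrm (q k - q l, p k - p l) * dnrm (x, 1) := fun x k l => by
    have := hdual (q k - q l, p k - p l) (x, 1)
    simp only [inner_sub_left] at this
    linarith
  refine Real.sqrt_integral_sq_le_of_ae_abs_le ?_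
  filter_upwards [ae_iff.2 hsupp] with x hx
  rw [abs_of_nonneg (sub_nonneg.2 (Finset.sup'_mono _ (Finset.subset_univ S) hS))]
  calc _ ≤ _ * dnrm (x, 1) := Finset.sup'_sub_sup'_le_sup'_inf'_mul hS _ _ _ (hdnrm_nonneg _)
        fun k _ l _ => hgap x k l
    _ ≤ _ := mul_le_mul_of_nonneg_left (hC x hx) hE

/-- With `E = max_{k∈[N]} min_{l∈S} ‖(q_k,p_k) - (q_l,p_l)‖` for a norm on
`ℝ^{d+1}` with dual norm `dnrm`, and `ρ` a probability measure supported on a compact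
`X ⊂ ℝ^d` on which `‖(x,1)‖_* ≤ C`, the `L²(ρ)` distance between `u_N` and `u_S` satisfies
`‖u_N - u_S‖_{L²(ρ)} ≤ E · sup_{x∈X} ‖(x,1)‖_*`. -/
theorem stmt_14 (d N : ℕ) (q : Fin N → EuclideanSpace ℝ (Fin d)) (p : Fin N → ℝ)
    (S : Finset (Fin N)) (hS : S.Nonempty)
    (nrm dnrm : EuclideanSpace ℝ (Fin d) × ℝ → ℝ)
    (hnrm_nonneg : ∀ z, 0 ≤ nrm z) (hdnrm_nonneg : ∀ w, 0 ≤ dnrm w)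
    (hdual : ∀ z w : EuclideanSpace ℝ (Fin d) × ℝ,
      (inner ℝ z.1 w.1 : ℝ) - z.2 * w.2 ≤ nrm z * dnrm w)
    (X : Set (EuclideanSpace ℝ (Fin d))) (hX : IsCompact X)
    (ρ : Measure (EuclideanSpace ℝ (Fin d))) [IsProbabilityMeasure ρ] (hsupp : ρ Xᶜ = 0)
    (C : ℝ) (hC : ∀ x ∈ X, dnrm (x, 1) ≤ C) :
    Real.sqrt (∫ x, ((Finset.univ.sup' (hS.mono (Finset.subset_univ S))
          (fun k => (inner ℝ (q k) x : ℝ) - p k))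
        - (S.sup' hS (fun k => (inner ℝ (q k) x : ℝ) - p k))) ^ 2 ∂ρ)
      ≤ (Finset.univ.sup' (hS.mono (Finset.subset_univ S))
          (fun k => S.inf' hS (fun l => nrm (q k - q l, p k - p l)))) * C :=
  stmt_14_general d N q p S hS nrm dnrm hnrm_nonneg hdnrm_nonneg hdual X ρ hsupp C hC
end
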